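/- Let ℒ = [[P - q*xb + QQ²*xb/(q - p*x), PP*QQ*xb/(p*x - q)],[PP'*QQ*xb/(q - p*x), PP*PP'*xb/(p*x - q)]] and ℳ = [[QQ*QQ'/(q - p*x), PP*QQ'/(p*x - q)],[PP*QQ/(q - p*x), PP²/(p*x - q) + (Q*xt - p)/x]], where PP² = p² - λ, PP'² = P² - λ, QQ² = q² - λ, QQ'² = Q² - λ. Then the compatibility condition ℒ(shifted in m)·ℳ = ℳ(shifted in l)·ℒ holds (for all λ in a nonempty open set, equivalently as an identity in λ) if and only if x, xb, xt, xbt satisfy the lattice sine-Gordon equation xbt/x = ((P - q*xb)/(q - P*xb))*((Q - p*xt)/(p - Q*xt)). -/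

import Mathlib

/-!
Writing `E` for the lattice sine-Gordon equation with its denominators cleared, the defect
`ℒ̃ℳ - ℳ̄ℒ` of the Lax pair is, for every `λ`, the rank-one matrix
`E / ((q - p x)(Q - p xt)(q - P xb)) • (QQ', PP')ᵀ (-p QQ, q PP / x)`.
So `E = 0` gives compatibility for every `λ`. Conversely, for `λ ∉ {p², q², Q²}` both factors
of the rank-one matrix are nonzero (`p` and `q` cannot both vanish since `q - p x ≠ 0`), so
compatibility at that single `λ` already forces `E = 0`.
-/

open Matrix

section LaxPair

variable {K : Type*} [Field K]

/-- `ℒ`; its `m`-shift is `laxL xt xbt p P Q QQ' PP PP'`. -/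
def laxL (x xb p P q QQ PP PP' : K) : Matrix (Fin 2) (Fin 2) K :=
  !![P - q * xb + QQ ^ 2 * xb / (q - p * x), PP * QQ * xb / (p * x - q);
     PP' * QQ * xb / (q - p * x), PP * PP' * xb / (p * x - q)]

/-- `ℳ`; its `l`-shift is `laxM xb xbt P q Q PP' QQ QQ'`. -/
def laxM (x xt p q Q PP QQ QQ' : K) : Matrix (Fin 2) (Fin 2) K :=
  !![QQ * QQ' / (q - p * x), PP * QQ' / (p * x - q);
     PP * QQ / (q - p * x), PP ^ 2 / (p * x - q) + (Q * xt - p) / x]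

def lsGResidual (x xb xt xbt p P q Q : K) : K :=
  xbt * ((q - P * xb) * (p - Q * xt)) - x * ((P - q * xb) * (Q - p * xt))

theorem lsG_iff_lsGResidual_eq_zero {x xb xt xbt p P q Q : K} (hx : x ≠ 0)
    (h3 : q - P * xb ≠ 0) (h4 : p - Q * xt ≠ 0) :
    xbt / x = ((P - q * xb) / (q - P * xb)) * ((Q - p * xt) / (p - Q * xt)) ↔
      lsGResidual x xb xt xbt p P q Q = 0 := by
  rw [lsGResidual, sub_eq_zero, div_mul_div_comm, div_eq_div_iff hx (mul_ne_zero h3 h4),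
    mul_comm x]

theorem laxL_mul_laxM_sub_laxM_mul_laxL {x xb xt xbt p P q Q lam PP PP' QQ QQ' : K}
    (hx : x ≠ 0) (hxb : xb ≠ 0)
    (h1 : q - p * x ≠ 0) (h2 : Q - p * xt ≠ 0) (h3 : q - P * xb ≠ 0)
    (hPP : PP ^ 2 = p ^ 2 - lam) (hPP' : PP' ^ 2 = P ^ 2 - lam)
    (hQQ : QQ ^ 2 = q ^ 2 - lam) (hQQ' : QQ' ^ 2 = Q ^ 2 - lam) :
    laxL xt xbt p P Q QQ' PP PP' * laxM x xt p q Q PP QQ QQ' -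
        laxM xb xbt P q Q PP' QQ QQ' * laxL x xb p P q QQ PP PP' =
      (lsGResidual x xb xt xbt p P q Q / ((q - p * x) * (Q - p * xt) * (q - P * xb))) •
        vecMulVec ![QQ', PP'] ![-p * QQ, q * PP / x] := by
  have h1' : p * x - q ≠ 0 := fun h => h1 (by linear_combination -h)
  have h2' : p * xt - Q ≠ 0 := fun h => h2 (by linear_combination -h)
  have h3' : P * xb - q ≠ 0 := fun h => h3 (by linear_combination -h)
  -- Each weight is the coefficient with which the corresponding square enters the entry; the
  -- squares only enter through `QQ'² - PP²` and `QQ² - PP'²`, so `λ` drops out.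
  ext i j
  fin_cases i <;> fin_cases j <;>
    simp only [laxL, laxM, lsGResidual, mul_fin_two, Matrix.sub_apply, Matrix.smul_apply,
      vecMulVec_apply, of_apply, cons_val', cons_val_zero, cons_val_one, empty_val',
      cons_val_fin_one, smul_eq_mul, Fin.zero_eta, Fin.mk_one]
  · linear_combination (norm := skip) (QQ' * QQ / (q - p * x)) *
      (xbt / (Q - p * xt) * (hQQ' - hPP) - xb / (q - P * xb) * (hQQ - hPP'))
    field_simp
    ring
  · linear_combination (norm := skip) (QQ' * PP / (p * x - q)) *
      (xbt / (Q - p * xt) * (hQQ' - hPP) - xb / (q - P * xb) * (hQQ - hPP'))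
    field_simp
    ring
  · linear_combination (norm := skip) (PP' * QQ / (q - p * x)) *
      (xbt / (Q - p * xt) * (hQQ' - hPP) - xb / (q - P * xb) * (hQQ - hPP'))
    field_simp
    ring
  · linear_combination (norm := skip) (PP' * PP / (p * x - q)) *
      (xbt / (Q - p * xt) * (hQQ' - hPP) - xb / (q - P * xb) * (hQQ - hPP'))
    field_simp
    ring

theorem lsGResidual_eq_zero_of_laxL_mul_laxM_eq [IsAlgClosed K]
    {x xb xt xbt p P q Q : K} (hx : x ≠ 0) (hxb : xb ≠ 0)
    (h1 : q - p * x ≠ 0) (h2 : Q - p * xt ≠ 0) (h3 : q - P * xb ≠ 0)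
    (hcompat : ∀ lam PP PP' QQ QQ' : K,
      PP ^ 2 = p ^ 2 - lam → PP' ^ 2 = P ^ 2 - lam →
      QQ ^ 2 = q ^ 2 - lam → QQ' ^ 2 = Q ^ 2 - lam →
      laxL xt xbt p P Q QQ' PP PP' * laxM x xt p q Q PP QQ QQ' =
        laxM xb xbt P q Q PP' QQ QQ' * laxL x xb p P q QQ PP PP') :
    lsGResidual x xb xt xbt p P q Q = 0 := by
  classical
  obtain ⟨lam, hlam⟩ := Infinite.exists_notMem_finset ({p ^ 2, q ^ 2, Q ^ 2} : Finset K)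
  simp only [Finset.mem_insert, Finset.mem_singleton, not_or] at hlam
  obtain ⟨hlam_p, hlam_q, hlam_Q⟩ := hlam
  obtain ⟨PP, hPP⟩ := IsAlgClosed.exists_pow_nat_eq (p ^ 2 - lam) two_pos
  obtain ⟨PP', hPP'⟩ := IsAlgClosed.exists_pow_nat_eq (P ^ 2 - lam) two_pos
  obtain ⟨QQ, hQQ⟩ := IsAlgClosed.exists_pow_nat_eq (q ^ 2 - lam) two_pos
  obtain ⟨QQ', hQQ'⟩ := IsAlgClosed.exists_pow_nat_eq (Q ^ 2 - lam) two_pos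
  have hPP0 : PP ≠ 0 := by rintro rfl; exact hlam_p (by linear_combination hPP)
  have hQQ0 : QQ ≠ 0 := by rintro rfl; exact hlam_q (by linear_combination hQQ)
  have hQQ'0 : QQ' ≠ 0 := by rintro rfl; exact hlam_Q (by linear_combination hQQ')
  have hu : ![QQ', PP'] ≠ 0 := fun h => hQQ'0 (congrFun h 0)
  have hv : ![-p * QQ, q * PP / x] ≠ 0 := by
    by_cases hp : p = 0
    · have hq : q ≠ 0 := by simpa [hp] using h1
      exact fun h => div_ne_zero (mul_ne_zero hq hPP0) hx (congrFun h 1)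
    · exact fun h => mul_ne_zero (neg_ne_zero.mpr hp) hQQ0 (congrFun h 0)
  have hdefect := laxL_mul_laxM_sub_laxM_mul_laxL (xbt := xbt) hx hxb h1 h2 h3 hPP hPP' hQQ hQQ'
  rw [hcompat lam PP PP' QQ QQ' hPP hPP' hQQ hQQ', sub_self, eq_comm, smul_eq_zero,
    vecMulVec_eq_zero, div_eq_zero_iff] at hdefect
  rcases hdefect with (hE | hden) | huv
  · exact hE
  · exact absurd hden (mul_ne_zero (mul_ne_zero h1 h2) h3)
  · exact absurd huv (not_or.mpr ⟨hu, hv⟩)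

end LaxPair

theorem Lax_lsG_general
    (x xb xt xbt p P q Q : ℂ)
    (hx : x ≠ 0) (hxb : xb ≠ 0)
    (h1 : q - p * x ≠ 0) (h2 : Q - p * xt ≠ 0) (h3 : q - P * xb ≠ 0)
    (h4 : p - Q * xt ≠ 0) :
    (∀ lam PP PP' QQ QQ' : ℂ,
      PP ^ 2 = p ^ 2 - lam → PP' ^ 2 = P ^ 2 - lam →
      QQ ^ 2 = q ^ 2 - lam → QQ' ^ 2 = Q ^ 2 - lam →
      !![P - Q * xbt + QQ' ^ 2 * xbt / (Q - p * xt), PP * QQ' * xbt / (p * xt - Q);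
         PP' * QQ' * xbt / (Q - p * xt), PP * PP' * xbt / (p * xt - Q)] *
        !![QQ * QQ' / (q - p * x), PP * QQ' / (p * x - q);
           PP * QQ / (q - p * x), PP ^ 2 / (p * x - q) + (Q * xt - p) / x] =
      !![QQ * QQ' / (q - P * xb), PP' * QQ' / (P * xb - q);
         PP' * QQ / (q - P * xb), PP' ^ 2 / (P * xb - q) + (Q * xbt - P) / xb] *
        !![P - q * xb + QQ ^ 2 * xb / (q - p * x), PP * QQ * xb / (p * x - q);
           PP' * QQ * xb / (q - p * x), PP * PP' * xb / (p * x - q)]) ↔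
    xbt / x = ((P - q * xb) / (q - P * xb)) * ((Q - p * xt) / (p - Q * xt)) := by
  rw [lsG_iff_lsGResidual_eq_zero hx h3 h4]
  refine ⟨lsGResidual_eq_zero_of_laxL_mul_laxM_eq hx hxb h1 h2 h3,
    fun hE lam PP PP' QQ QQ' hPP hPP' hQQ hQQ' => ?_⟩
  have hdefect := laxL_mul_laxM_sub_laxM_mul_laxL (xbt := xbt) hx hxb h1 h2 h3 hPP hPP' hQQ hQQ'
  rw [hE, zero_div, zero_smul, sub_eq_zero] at hdefect
  exact hdefect

/-- The compatibility condition of the Lax pair (B.4), holding as an identity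
in the spectral parameter `lam`, is equivalent to the lattice sine-Gordon
equation. -/
theorem Lax_lsG
    (x xb xt xbt p P q Q : ℂ)
    (hx : x ≠ 0) (hxb : xb ≠ 0) (hxt : xt ≠ 0) (hxbt : xbt ≠ 0)
    (h1 : q - p * x ≠ 0) (h2 : Q - p * xt ≠ 0) (h3 : q - P * xb ≠ 0)
    (h4 : p - Q * xt ≠ 0) :
    (∀ lam PP PP' QQ QQ' : ℂ,
      PP ^ 2 = p ^ 2 - lam → PP' ^ 2 = P ^ 2 - lam →
      QQ ^ 2 = q ^ 2 - lam → QQ' ^ 2 = Q ^ 2 - lam →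
      !![P - Q * xbt + QQ' ^ 2 * xbt / (Q - p * xt), PP * QQ' * xbt / (p * xt - Q);
         PP' * QQ' * xbt / (Q - p * xt), PP * PP' * xbt / (p * xt - Q)] *
        !![QQ * QQ' / (q - p * x), PP * QQ' / (p * x - q);
           PP * QQ / (q - p * x), PP ^ 2 / (p * x - q) + (Q * xt - p) / x] =
      !![QQ * QQ' / (q - P * xb), PP' * QQ' / (P * xb - q);
         PP' * QQ / (q - P * xb), PP' ^ 2 / (P * xb - q) + (Q * xbt - P) / xb] *
        !![P - q * xb + QQ ^ 2 * xb / (q - p * x), PP * QQ * xb / (p * x - q);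
           PP' * QQ * xb / (q - p * x), PP * PP' * xb / (p * x - q)]) ↔
    xbt / x = ((P - q * xb) / (q - P * xb)) * ((Q - p * xt) / (p - Q * xt)) :=
  Lax_lsG_general x xb xt xbt p P q Q hx hxb h1 h2 h3 h4
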